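/- Let K be a field of characteristic zero, m > 1 an integer, ω ∈ K a primitive m-th root of unity, and d₁, ..., d_k positive integers with m | d_i − 1 for all i. Then for the group G generated by H₁ = {(x,y) ↦ (x+αy, y)} and K_{d_i} = {(x,y) ↦ (x, y+βx^{d_i})}, the diagonal G-action on the set of pairs of distinct points of K² \ {0} is not transitive; i.e., G does not act 2-transitively on K² \ {0}. In particular, if gcd(d₁−1, ..., d_k−1) > 1 then ⟨H₁, K_{d₁}, ..., K_{d_k}⟩ does not act 2-transitively on A² \ {0}. -/

import Mathlib

/-!
Scaling by a root of unity `ω` with `ω ^ (dᵢ - 1) = 1` commutes with every shear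
`(x, y) ↦ (x + α y, y)` and `(x, y) ↦ (x, y + β x ^ dᵢ)`, hence with the whole group they generate.
So the group preserves the set of pairs `(P, ω P)`: it cannot move `((1, 0), (ω, 0))` to
`((1, 0), (1, 1))`.
-/

open Subgroup

section

variable {K : Type*} [Field K]

lemma pow_eq_self_of_pow_eq_one_of_dvd_sub_one {M : Type*} [Monoid M] {x : M} {m d : ℕ}
    (h : x ^ m = 1) (hd : (m : ℤ) ∣ (d : ℤ) - 1) : x ^ d = x := by
  have hmod : 1 ≡ d [MOD orderOf x] :=
    (Nat.modEq_iff_dvd.2 (by exact_mod_cast hd)).of_dvd (orderOf_dvd_of_pow_eq_one h)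
  rw [← pow_mod_orderOf, ← hmod, pow_mod_orderOf, pow_one]

variable (K) in
def shearGenerators {k : ℕ} (d : Fin k → ℕ) : Set (Equiv.Perm (K × K)) :=
  {σ | (∃ α : K, ∀ p : K × K, σ p = (p.1 + α * p.2, p.2)) ∨
    (∃ (β : K) (i : Fin k), ∀ p : K × K, σ p = (p.1, p.2 + β * p.1 ^ (d i)))}

def IsPairTransitiveOnNonzero (G : Subgroup (Equiv.Perm (K × K))) : Prop :=
  ∀ P₁ P₂ Q₁ Q₂ : K × K, P₁ ≠ 0 → P₂ ≠ 0 → Q₁ ≠ 0 → Q₂ ≠ 0 → P₁ ≠ P₂ → Q₁ ≠ Q₂ →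
    ∃ σ ∈ G, σ P₁ = Q₁ ∧ σ P₂ = Q₂

lemma closure_shearGenerators_le_centralizer {k : ℕ} {d : Fin k → ℕ} (u : Kˣ)
    (hu : ∀ i, (u : K) ^ d i = u) :
    closure (shearGenerators K d) ≤ centralizer {MulAction.toPerm u} := by
  refine (closure_le _).2 ?_
  rintro σ (⟨α, hσ⟩ | ⟨β, i, hσ⟩) <;> rw [SetLike.mem_coe, mem_centralizer_singleton_iff] <;>
    ext p <;> simp only [Equiv.Perm.mul_apply, MulAction.toPerm_apply, hσ, Prod.smul_fst,
      Prod.smul_snd, Units.smul_def, smul_eq_mul, mul_pow, hu] <;> ring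

lemma not_isPairTransitiveOnNonzero_of_le_centralizer {G : Subgroup (Equiv.Perm (K × K))}
    {u : Kˣ} (hu : u ≠ 1) (hG : G ≤ centralizer {MulAction.toPerm u}) :
    ¬ IsPairTransitiveOnNonzero G := by
  intro htrans
  have hu_val : (u : K) ≠ 1 := Units.val_eq_one.not.2 hu
  obtain ⟨σ, hσG, hσ₁, hσ₂⟩ := htrans (1, 0) (u, 0) (1, 0) (1, 1)
    (by simp) (by simp) (by simp) (by simp) (by simpa using hu_val.symm) (by simp)
  have hcomm : σ (u • (1, 0)) = u • σ (1, 0) :=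
    DFunLike.congr_fun (mem_centralizer_singleton_iff.1 (hG hσG)) (1, 0)
  rw [hσ₁, show u • ((1 : K), (0 : K)) = ((u : K), 0) by simp [Units.smul_def], hσ₂] at hcomm
  simpa [Units.smul_def] using congrArg Prod.snd hcomm

lemma not_isPairTransitiveOnNonzero_of_isPrimitiveRoot {m : ℕ} (hm : 1 < m) {ω : K}
    (hω : IsPrimitiveRoot ω m) {k : ℕ} {d : Fin k → ℕ} (hd : ∀ i, (m : ℤ) ∣ (d i : ℤ) - 1) :
    ¬ IsPairTransitiveOnNonzero (closure (shearGenerators K d)) := by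
  have hω₀ : ω ≠ 0 := hω.ne_zero (by omega)
  refine not_isPairTransitiveOnNonzero_of_le_centralizer (u := Units.mk0 ω hω₀)
    (by simpa [Units.ext_iff] using hω.ne_one hm) (closure_shearGenerators_le_centralizer _ ?_)
  exact fun i => pow_eq_self_of_pow_eq_one_of_dvd_sub_one hω.pow_eq_one (hd i)

end

theorem stmt_17 (K : Type*) [Field K] [CharZero K] [IsAlgClosed K] :
    (∀ (m : ℕ), 1 < m → ∀ ω : K, IsPrimitiveRoot ω m →
      ∀ (k : ℕ) (d : Fin k → ℕ), (∀ i, 0 < d i) → (∀ i, (m : ℤ) ∣ (d i : ℤ) - 1) →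
      ¬ (∀ P₁ P₂ Q₁ Q₂ : K × K, P₁ ≠ 0 → P₂ ≠ 0 → Q₁ ≠ 0 → Q₂ ≠ 0 → P₁ ≠ P₂ → Q₁ ≠ Q₂ →
          ∃ σ ∈ Subgroup.closure ({σ : Equiv.Perm (K × K) |
              (∃ α : K, ∀ p : K × K, σ p = (p.1 + α * p.2, p.2)) ∨
              (∃ (β : K) (i : Fin k), ∀ p : K × K, σ p = (p.1, p.2 + β * p.1 ^ (d i)))}),
            σ P₁ = Q₁ ∧ σ P₂ = Q₂)) ∧
    (∀ (k : ℕ) (d : Fin k → ℕ), (∀ i, 0 < d i) →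
      1 < Finset.univ.gcd (fun i => ((d i : ℤ) - 1).natAbs) →
      ¬ (∀ P₁ P₂ Q₁ Q₂ : K × K, P₁ ≠ 0 → P₂ ≠ 0 → Q₁ ≠ 0 → Q₂ ≠ 0 → P₁ ≠ P₂ → Q₁ ≠ Q₂ →
          ∃ σ ∈ Subgroup.closure ({σ : Equiv.Perm (K × K) |
              (∃ α : K, ∀ p : K × K, σ p = (p.1 + α * p.2, p.2)) ∨
              (∃ (β : K) (i : Fin k), ∀ p : K × K, σ p = (p.1, p.2 + β * p.1 ^ (d i)))}),
            σ P₁ = Q₁ ∧ σ P₂ = Q₂)) := by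
  refine ⟨fun m hm ω hω k d _ hd => not_isPairTransitiveOnNonzero_of_isPrimitiveRoot hm hω hd,
    fun k d _ hgcd => ?_⟩
  set g := Finset.univ.gcd fun i => ((d i : ℤ) - 1).natAbs
  have : NeZero (g : K) := ⟨Nat.cast_ne_zero.2 (by omega)⟩
  obtain ⟨ω, hω⟩ := HasEnoughRootsOfUnity.exists_primitiveRoot K g
  refine not_isPairTransitiveOnNonzero_of_isPrimitiveRoot hgcd hω fun i => ?_
  exact Int.dvd_natAbs.1 (Int.natCast_dvd_natCast.2 (Finset.gcd_dvd (Finset.mem_univ i)))
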